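/- For every integer r ≥ 1, the homomorphism from the free group F(c₁,c₂) to G_cd sending c₁, c₂ to the generators c₁, c₂ of G_cd is injective; moreover, the image of this homomorphism intersects the image of the homomorphism F(d₁,d₂) → G_cd (sending d₁, d₂ to the generators d₁, d₂) only in the identity element. -/
import Mathlib


/-- The "progression word" `x y^(s+1) x y^(s+2) ⋯ x y^(s+r)` in a group. -/
def wordProg {G : Type*} [Group G] (x y : G) (s r : ℕ) : G :=
  ((List.range r).map (fun k => x * y ^ (s + k + 1))).prod

/-- Generators of `G_cd`: `0 = c₁`, `1 = c₂`, `2 = d₁`, `3 = d₂`.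
The relators are `cᵢ⁻¹ d_j cᵢ D_{ij}⁻¹` for `1 ≤ i,j ≤ 2`, where
`D_{ij} = (d₁d₂^{r(2i+j)+1})(d₁d₂^{r(2i+j)+2})⋯(d₁d₂^{r(2i+j)+r})`. -/
def cdRels (r : ℕ) : Set (FreeGroup (Fin 4)) :=
  { w | ∃ i j : Fin 2,
      w = (FreeGroup.of (⟨i.val, by omega⟩ : Fin 4))⁻¹ *
          FreeGroup.of (⟨j.val + 2, by omega⟩ : Fin 4) *
          FreeGroup.of (⟨i.val, by omega⟩ : Fin 4) *
          (wordProg (FreeGroup.of (2 : Fin 4)) (FreeGroup.of (3 : Fin 4))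
            (r * (2 * (i.val + 1) + (j.val + 1))) r)⁻¹ }

/-- `G_cd = ⟨c₁,c₂,d₁,d₂ ∣ cᵢ⁻¹d_jcᵢ = D_{ij}, 1 ≤ i,j ≤ 2⟩`. -/
abbrev Gcd (r : ℕ) := PresentedGroup (cdRels r)

def fmap : Fin 4 → FreeGroup (Fin 2) := ![FreeGroup.of 0, FreeGroup.of 1, 1, 1]

lemma wordProg_one {G : Type*} [Group G] (s r : ℕ) : wordProg (1:G) 1 s r = 1 := by
  simp [wordProg]

lemma map_wordProg {G H : Type*} [Group G] [Group H] (φ : G →* H) (x y : G) (s r : ℕ) :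
    φ (wordProg x y s r) = wordProg (φ x) (φ y) s r := by
  simp [wordProg, map_list_prod, List.map_map, Function.comp_def]

lemma rels_killed (r : ℕ) : ∀ w ∈ cdRels r, FreeGroup.lift fmap w = 1 := by
  rintro w ⟨i, j, rfl⟩
  simp only [map_mul, map_inv, FreeGroup.lift_apply_of, map_wordProg, FreeGroup.lift_apply_of]
  have h2 : fmap (⟨(j:ℕ) + 2, by omega⟩ : Fin 4) = 1 := by
    fin_cases j <;> rfl
  have h3 : fmap (2 : Fin 4) = 1 := rfl
  have h4 : fmap (3 : Fin 4) = 1 := rfl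
  rw [h2, h3, h4, wordProg_one]
  group

/-- For every `r ≥ 1`, the homomorphism `F(c₁,c₂) → G_cd` sending `c₁, c₂` to the
generators `c₁, c₂` of `G_cd` is injective, and its image intersects the image of
the homomorphism `F(d₁,d₂) → G_cd` (sending `d₁, d₂` to the generators `d₁, d₂`)
only in the identity. -/
theorem freeGroup_c_embeds_in_Gcd_and_meets_d_trivially (r : ℕ) (hr : 1 ≤ r) :
    Function.Injective (FreeGroup.lift (fun i : Fin 2 =>
      (PresentedGroup.of (⟨i.val, by omega⟩ : Fin 4) : Gcd r))) ∧
    (FreeGroup.lift (fun i : Fin 2 =>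
        (PresentedGroup.of (⟨i.val, by omega⟩ : Fin 4) : Gcd r))).range ⊓
      (FreeGroup.lift (fun j : Fin 2 =>
        (PresentedGroup.of (⟨j.val + 2, by omega⟩ : Fin 4) : Gcd r))).range = ⊥ := by

  set liftc := (FreeGroup.lift (fun i : Fin 2 =>
      (PresentedGroup.of (⟨i.val, by omega⟩ : Fin 4) : Gcd r))) with hliftc
  set liftd := (FreeGroup.lift (fun j : Fin 2 =>
      (PresentedGroup.of (⟨j.val + 2, by omega⟩ : Fin 4) : Gcd r))) with hliftd
  let π : Gcd r →* FreeGroup (Fin 2) := PresentedGroup.toGroup (rels_killed r)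
  have hret : ∀ w, π (liftc w) = w := by
    intro w
    have : π.comp liftc = MonoidHom.id _ := by
      apply FreeGroup.ext_hom
      intro a
      simp only [MonoidHom.comp_apply, MonoidHom.id_apply, hliftc, FreeGroup.lift_apply_of]
      rw [PresentedGroup.toGroup.of]
      fin_cases a <;> rfl
    simpa using congrArg (fun f => f w) this
  have hkill : ∀ v, π (liftd v) = 1 := by
    intro v
    have : π.comp liftd = 1 := by
      apply FreeGroup.ext_hom
      intro a
      simp only [MonoidHom.comp_apply, MonoidHom.one_apply, hliftd, FreeGroup.lift_apply_of]
      rw [PresentedGroup.toGroup.of]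
      fin_cases a <;> rfl
    simpa using congrArg (fun f => f v) this
  constructor
  · exact Function.LeftInverse.injective hret
  · rw [eq_bot_iff]
    rintro x ⟨⟨w, rfl⟩, ⟨v, hv⟩⟩
    have h1 : w = 1 := by rw [← hret w, ← hv, hkill]
    simp [h1]
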